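/- At every stationary point (W1, W2) of the non-uniform ℓ2 regularized linear autoencoder loss L, the matrix C = (I − W2W1)XXᵀ ∈ ℝ^{m×m} is positive semidefinite, i.e. vᵀCv ≥ 0 for all v ∈ ℝ^m. -/

import Mathlib

open Matrix BigOperators

attribute [local instance] Matrix.frobeniusNormedAddCommGroup Matrix.frobeniusNormedSpace

/-- Squared Frobenius norm. -/
noncomputable def frobSq {a b : ℕ} (M : Matrix (Fin a) (Fin b) ℝ) : ℝ :=
  ∑ i, ∑ j, (M i j) ^ 2

/-- The non-uniform ℓ2 regularized linear autoencoder loss. -/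
noncomputable def LAEloss (m k n : ℕ) (X : Matrix (Fin m) (Fin n) ℝ) (lam : Fin k → ℝ)
    (p : Matrix (Fin k) (Fin m) ℝ × Matrix (Fin m) (Fin k) ℝ) : ℝ :=
  (1 / (n : ℝ)) * frobSq (X - p.2 * p.1 * X)
    + frobSq (Matrix.diagonal (fun i => Real.sqrt (lam i)) * p.1)
    + frobSq (p.2 * Matrix.diagonal (fun i => Real.sqrt (lam i)))

/-! Setting the partial derivative of the loss in `W2` to zero gives `W2 Λ = (1/n) C W1ᵀ` with
`C = (I - W2 W1) A`, `A = X Xᵀ`. Hence `C Q = W2 W1` for the positive semidefinite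
`Q = (1/n) W1ᵀ Λ⁻¹ W1`, that is, `C (I + Q A) = A`. For positive semidefinite `A` and `Q` the
matrix `I + Q A` is invertible (if `x = -Q A x` then `xᵀ A x = -(A x)ᵀ Q (A x) ≤ 0`, so `A x = 0`
and `x = 0`), and writing `v = (I + Q A) u` gives `vᵀ C v = uᵀ A u + (A u)ᵀ Q (A u) ≥ 0`. -/

open scoped ComplexOrder

section PosSemidef

variable {ι 𝕜 : Type*} [Fintype ι] [DecidableEq ι] [RCLike 𝕜] {A Q : Matrix ι ι 𝕜}

lemma Matrix.PosSemidef.isUnit_one_add_mul (hA : A.PosSemidef) (hQ : Q.PosSemidef) :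
    IsUnit (1 + Q * A) := by
  refine mulVec_injective_iff_isUnit.mp ?_
  rw [← coe_mulVecLin]
  refine (injective_iff_map_eq_zero _).mpr fun x hx => ?_
  have hx' : x = -(Q *ᵥ (A *ᵥ x)) := by
    rw [coe_mulVecLin, add_mulVec, one_mulVec, ← mulVec_mulVec] at hx
    exact eq_neg_of_add_eq_zero_left hx
  have hAx : A *ᵥ x = 0 := by
    refine (hA.dotProduct_mulVec_zero_iff x).mp (le_antisymm ?_ (hA.dotProduct_mulVec_nonneg x))
    calc star x ⬝ᵥ (A *ᵥ x) = -(star (A *ᵥ x) ⬝ᵥ (Q *ᵥ (A *ᵥ x))) := by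
          nth_rewrite 1 [hx']
          rw [star_neg, neg_dotProduct, star_mulVec, ← dotProduct_mulVec, hQ.isHermitian.eq]
      _ ≤ 0 := neg_nonpos.mpr (hQ.dotProduct_mulVec_nonneg _)
  simpa [hAx] using hx'

lemma Matrix.PosSemidef.dotProduct_mulVec_nonneg_of_mul_one_add_mul_eq {C : Matrix ι ι 𝕜}
    (hA : A.PosSemidef) (hQ : Q.PosSemidef) (h : C * (1 + Q * A) = A) (v : ι → 𝕜) :
    0 ≤ star v ⬝ᵥ (C *ᵥ v) := by
  obtain ⟨u, rfl⟩ := mulVec_surjective_iff_isUnit.mpr (hA.isUnit_one_add_mul hQ) v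
  have hv : star ((1 + Q * A) *ᵥ u) ⬝ᵥ (C *ᵥ ((1 + Q * A) *ᵥ u))
      = star u ⬝ᵥ (A *ᵥ u) + star (A *ᵥ u) ⬝ᵥ (Q *ᵥ (A *ᵥ u)) := by
    rw [mulVec_mulVec, h, add_mulVec, one_mulVec, ← mulVec_mulVec, star_add, add_dotProduct,
      star_mulVec, ← dotProduct_mulVec, hQ.isHermitian.eq]
  rw [hv]
  exact add_nonneg (hA.dotProduct_mulVec_nonneg u) (hQ.dotProduct_mulVec_nonneg _)

end PosSemidef

lemma Matrix.mul_one_add_mul_eq_of_mul_diagonal_eq {ι κ K : Type*} [Fintype ι] [DecidableEq ι]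
    [Fintype κ] [DecidableEq κ] [Field K] {c : K} {d : κ → K} (hd : ∀ i, d i ≠ 0)
    {A : Matrix ι ι K} {U : Matrix ι κ K} {W : Matrix κ ι K}
    (h : U * diagonal d = c • ((1 - U * W) * A * Wᵀ)) :
    (1 - U * W) * A * (1 + (c • (Wᵀ * diagonal d⁻¹ * W)) * A) = A := by
  have hdd : diagonal d * diagonal d⁻¹ = 1 := by
    rw [diagonal_mul_diagonal, ← diagonal_one]
    exact congrArg diagonal (funext fun i => mul_inv_cancel₀ (hd i))
  have hUW : (1 - U * W) * A * (c • (Wᵀ * diagonal d⁻¹ * W)) = U * W := by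
    rw [Matrix.mul_smul, ← Matrix.mul_assoc, ← Matrix.mul_assoc, ← Matrix.smul_mul,
      ← Matrix.smul_mul, ← h, Matrix.mul_assoc U, hdd, Matrix.mul_one]
  rw [Matrix.mul_add, Matrix.mul_one, ← Matrix.mul_assoc, hUW, Matrix.sub_mul, Matrix.one_mul,
    sub_add_cancel]

lemma linear_coeff_eq_zero_of_fderiv_eq_zero {E : Type*} [NormedAddCommGroup E] [NormedSpace ℝ E]
    {f : E → ℝ} {x d : E} {b c : ℝ} (hf : DifferentiableAt ℝ f x) (hx : fderiv ℝ f x = 0)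
    (hline : ∀ t : ℝ, f (x + t • d) = f x + b * t + c * t ^ 2) : b = 0 := by
  have hcomp : HasDerivAt (fun t : ℝ => f (x + t • d)) 0 0 := by
    have hd : HasDerivAt (fun t : ℝ => x + t • d) d 0 := by
      simpa using ((hasDerivAt_id (0 : ℝ)).smul_const d).const_add x
    have hf' : HasFDerivAt f (0 : E →L[ℝ] ℝ) (x + (0 : ℝ) • d) := by
      simpa [hx] using hf.hasFDerivAt
    exact (hf'.comp_hasDerivAt (0 : ℝ) hd).congr_deriv (zero_apply _)
  have hpoly : HasDerivAt (fun t : ℝ => f x + b * t + c * t ^ 2) b 0 := by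
    simpa using (((hasDerivAt_id (0 : ℝ)).const_mul b).const_add (f x)).fun_add
      ((hasDerivAt_pow 2 (0 : ℝ)).const_mul c)
  exact hpoly.unique (by simpa only [hline] using hcomp)

lemma frobSq_eq_trace {a b : ℕ} (M : Matrix (Fin a) (Fin b) ℝ) : frobSq M = (Mᵀ * M).trace := by
  simp only [frobSq, trace, diag, mul_apply, transpose_apply, sq]
  exact Finset.sum_comm

lemma frobSq_neg {a b : ℕ} (M : Matrix (Fin a) (Fin b) ℝ) : frobSq (-M) = frobSq M := by
  simp [frobSq]

lemma frobSq_add_smul {a b : ℕ} (M N : Matrix (Fin a) (Fin b) ℝ) (t : ℝ) :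
    frobSq (M + t • N) = frobSq M + 2 * (Mᵀ * N).trace * t + frobSq N * t ^ 2 := by
  have hsym : (Nᵀ * M).trace = (Mᵀ * N).trace := by
    rw [← trace_transpose, transpose_mul, transpose_transpose]
  simp only [frobSq_eq_trace, transpose_add, transpose_smul, Matrix.add_mul, Matrix.mul_add,
    Matrix.smul_mul, Matrix.mul_smul, trace_add, trace_smul, hsym, smul_eq_mul]
  ring

lemma differentiable_LAEloss (m k n : ℕ) (X : Matrix (Fin m) (Fin n) ℝ) (lam : Fin k → ℝ) :
    Differentiable ℝ (LAEloss m k n X lam) := by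
  unfold LAEloss frobSq
  simp only [mul_apply, Matrix.sub_apply]
  fun_prop

lemma LAEloss_add_smul_snd {m k n : ℕ} (X : Matrix (Fin m) (Fin n) ℝ) {lam : Fin k → ℝ}
    (hlam : 0 ≤ lam) (W1 : Matrix (Fin k) (Fin m) ℝ) (W2 V : Matrix (Fin m) (Fin k) ℝ) (t : ℝ) :
    LAEloss m k n X lam ((W1, W2) + t • (0, V)) = LAEloss m k n X lam (W1, W2)
      + 2 * ((W2 * diagonal lam - (1 / (n : ℝ)) • ((X - W2 * W1 * X) * Xᵀ * W1ᵀ))ᵀ * V).trace * t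
      + ((1 / (n : ℝ)) * frobSq (V * W1 * X) + frobSq (V * diagonal fun i => √(lam i)))
        * t ^ 2 := by
  set S : Matrix (Fin k) (Fin k) ℝ := diagonal fun i => √(lam i)
  set E := X - W2 * W1 * X
  have hSS : S * Sᵀ = diagonal lam := by
    rw [diagonal_transpose, diagonal_mul_diagonal]
    exact congrArg diagonal (funext fun i => Real.mul_self_sqrt (hlam i))
  have hdata : X - (W2 + t • V) * W1 * X = E + t • (-(V * W1 * X)) := by
    simp only [E, Matrix.add_mul, Matrix.smul_mul, smul_neg]; abel
  have hpenalty : (W2 + t • V) * S = W2 * S + t • (V * S) := by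
    rw [Matrix.add_mul, Matrix.smul_mul]
  have hdata_trace : (Eᵀ * -(V * W1 * X)).trace = -((E * Xᵀ * W1ᵀ)ᵀ * V).trace := by
    rw [Matrix.mul_neg, trace_neg, trace_mul_comm, trace_mul_comm _ V]
    simp only [transpose_mul, transpose_transpose, Matrix.mul_assoc]
  have hpenalty_trace : ((W2 * S)ᵀ * (V * S)).trace = ((W2 * diagonal lam)ᵀ * V).trace := by
    rw [← hSS, trace_mul_comm, trace_mul_comm _ V]
    simp only [transpose_mul, transpose_transpose, Matrix.mul_assoc]
  simp only [LAEloss, Prod.smul_mk, smul_zero, Prod.mk_add_mk, add_zero]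
  rw [hdata, hpenalty, frobSq_add_smul, frobSq_add_smul, frobSq_neg, hdata_trace,
    hpenalty_trace, transpose_sub, Matrix.sub_mul (W2 * diagonal lam)ᵀ, trace_sub,
    transpose_smul, Matrix.smul_mul, trace_smul, smul_eq_mul]
  ring

lemma mul_diagonal_eq_of_fderiv_LAEloss_eq_zero {m k n : ℕ} (X : Matrix (Fin m) (Fin n) ℝ)
    {lam : Fin k → ℝ} (hlam : 0 ≤ lam) {W1 : Matrix (Fin k) (Fin m) ℝ}
    {W2 : Matrix (Fin m) (Fin k) ℝ} (hstat : fderiv ℝ (LAEloss m k n X lam) (W1, W2) = 0) :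
    W2 * diagonal lam = (1 / (n : ℝ)) • ((1 - W2 * W1) * (X * Xᵀ) * W1ᵀ) := by
  set G := W2 * diagonal lam - (1 / (n : ℝ)) • ((X - W2 * W1 * X) * Xᵀ * W1ᵀ)
  have hG : ∀ V : Matrix (Fin m) (Fin k) ℝ, (Gᵀ * V).trace = 0 := fun V =>
    (mul_eq_zero.mp (linear_coeff_eq_zero_of_fderiv_eq_zero (differentiable_LAEloss m k n X lam _)
      hstat (LAEloss_add_smul_snd X hlam W1 W2 V))).resolve_left two_ne_zero
  have hG0 : G = 0 := by
    simpa [conjTranspose_eq_transpose_of_trivial] using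
      (trace_conjTranspose_mul_self_eq_zero_iff (A := G)).mp (hG G)
  rw [sub_eq_zero.mp hG0, Matrix.sub_mul X, Matrix.sub_mul 1, Matrix.one_mul,
    Matrix.mul_assoc (W2 * W1) X]

theorem C_posSemidef_at_stationary_general (m k n : ℕ)
    (X : Matrix (Fin m) (Fin n) ℝ) (lam : Fin k → ℝ)
    (hlam_pos : ∀ i, 0 < lam i)
    (W1 : Matrix (Fin k) (Fin m) ℝ) (W2 : Matrix (Fin m) (Fin k) ℝ)
    (hstat : fderiv ℝ (LAEloss m k n X lam) (W1, W2) = 0) :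
    ∀ v : Fin m → ℝ, 0 ≤ v ⬝ᵥ ((((1 : Matrix (Fin m) (Fin m) ℝ) - W2 * W1) * (X * Xᵀ)) *ᵥ v) := by
  intro v
  have hW2 := mul_diagonal_eq_of_fderiv_LAEloss_eq_zero X (fun i => (hlam_pos i).le) hstat
  have hA : (X * Xᵀ).PosSemidef := by
    simpa [conjTranspose_eq_transpose_of_trivial] using posSemidef_self_mul_conjTranspose X
  have hQ : ((1 / (n : ℝ)) • (W1ᵀ * diagonal lam⁻¹ * W1)).PosSemidef := by
    refine .smul ?_ (by positivity)
    have hΛinv : (diagonal lam⁻¹).PosSemidef :=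
      .diagonal fun i => (inv_pos.mpr (hlam_pos i)).le
    simpa [conjTranspose_eq_transpose_of_trivial] using hΛinv.conjTranspose_mul_mul_same W1
  simpa using hA.dotProduct_mulVec_nonneg_of_mul_one_add_mul_eq hQ
    (mul_one_add_mul_eq_of_mul_diagonal_eq (fun i => (hlam_pos i).ne') hW2) v

/-- At every stationary point `(W1, W2)` of the non-uniform ℓ2 regularized LAE loss,
the matrix `C = (I − W2W1)XXᵀ` is positive semidefinite. -/
theorem C_posSemidef_at_stationary (m k n : ℕ) (hk : 1 ≤ k) (hmk : k < m) (hn : 1 ≤ n)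
    (X : Matrix (Fin m) (Fin n) ℝ) (lam : Fin k → ℝ)
    (hlam_pos : ∀ i, 0 < lam i) (hlam_mono : StrictMono lam)
    (W1 : Matrix (Fin k) (Fin m) ℝ) (W2 : Matrix (Fin m) (Fin k) ℝ)
    (hstat : fderiv ℝ (LAEloss m k n X lam) (W1, W2) = 0) :
    ∀ v : Fin m → ℝ, 0 ≤ v ⬝ᵥ ((((1 : Matrix (Fin m) (Fin m) ℝ) - W2 * W1) * (X * Xᵀ)) *ᵥ v) :=
  C_posSemidef_at_stationary_general m k n X lam hlam_pos W1 W2 hstat
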